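/- Under the SMNLI data-generating process, the mutual information between Y and S is zero if and only if ρ_sp = 1/3, provided the genre-label assignment s ↦ y_s is non-constant (at least two genres have different associated labels). -/

import Mathlib

open Classical in
/-- Probability of an event under a weight function on a finite outcome space. -/
noncomputable def Pr {Ω : Type*} [Fintype Ω] (w : Ω → ℝ) (E : Ω → Prop) : ℝ :=
  ∑ ω, if E ω then w ω else 0

/-- SMNLI DGP joint weight on outcomes (S, C). -/
noncomputable def smW {S : Type*} [Fintype S] (y : S → Fin 3) (ρsp : ℝ)
    (ω : S × Fin 3) : ℝ :=
  (1 / (Fintype.card S : ℝ)) * (if ω.2 = y ω.1 then ρsp else (1 - ρsp) / 2)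

open Classical

lemma Pr_and {S : Type*} [Fintype S] (w : S × Fin 3 → ℝ) (c : Fin 3) (s : S) :
    Pr w (fun ω => ω.2 = c ∧ ω.1 = s) = w (s, c) := by
  unfold Pr
  have : ∀ ω : S × Fin 3, (ω.2 = c ∧ ω.1 = s) ↔ ω = (s, c) := by
    intro ω; constructor
    · rintro ⟨h1, h2⟩; exact Prod.ext h2 h1
    · rintro rfl; exact ⟨rfl, rfl⟩
  simp only [this]
  rw [Finset.sum_ite_eq' Finset.univ (s, c) w]
  simp

lemma Pr_fst {S : Type*} [Fintype S] (w : S × Fin 3 → ℝ) (s : S) :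
    Pr w (fun ω => ω.1 = s) = ∑ c : Fin 3, w (s, c) := by
  unfold Pr
  rw [Fintype.sum_prod_type]
  rw [Finset.sum_eq_single s]
  · simp
  · intro b _ hb; simp [hb]
  · simp

lemma Pr_snd {S : Type*} [Fintype S] (w : S × Fin 3 → ℝ) (c : Fin 3) :
    Pr w (fun ω => ω.2 = c) = ∑ s : S, w (s, c) := by
  unfold Pr
  rw [Fintype.sum_prod_type]
  refine Finset.sum_congr rfl fun a _ => ?_
  rw [Finset.sum_eq_single c]
  · simp
  · intro b _ hb; simp [hb]
  · simp

lemma sum3 (t : Fin 3) (a b : ℝ) : ∑ c : Fin 3, (if c = t then a else b) = a + 2*b := by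
  fin_cases t <;> simp [Fin.sum_univ_three] <;> ring

/-- SMNLI DGP: the mutual information between Y and S is zero (equivalently, Y and
S are independent) if and only if ρsp = 1/3, provided the genre-label assignment is
non-constant. -/
theorem smnli_indep_iff_third {S : Type*} [Fintype S] [Nonempty S] (y : S → Fin 3)
    (hnc : ∃ s₁ s₂ : S, y s₁ ≠ y s₂) (ρsp : ℝ) (hsp : ρsp ∈ Set.Icc (0:ℝ) 1) :
    (∀ (c : Fin 3) (s : S),
        Pr (smW y ρsp) (fun ω => ω.2 = c ∧ ω.1 = s)
          = Pr (smW y ρsp) (fun ω => ω.2 = c) * Pr (smW y ρsp) (fun ω => ω.1 = s))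
      ↔ ρsp = 1/3 := by
  have hN : (Fintype.card S : ℝ) ≠ 0 := by
    exact_mod_cast Fintype.card_ne_zero
  have hfst : ∀ s : S, Pr (smW y ρsp) (fun ω => ω.1 = s) = 1 / (Fintype.card S : ℝ) := by
    intro s
    rw [Pr_fst]
    simp only [smW]
    rw [← Finset.mul_sum, sum3]
    field_simp
    ring
  constructor
  · intro h
    obtain ⟨s₁, s₂, hne⟩ := hnc
    have h1 := h (y s₁) s₁
    have h2 := h (y s₁) s₂
    rw [Pr_and, hfst] at h1 h2
    have hw1 : smW y ρsp (s₁, y s₁) = (1 / (Fintype.card S : ℝ)) * ρsp := by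
      simp [smW]
    have hw2 : smW y ρsp (s₂, y s₁) = (1 / (Fintype.card S : ℝ)) * ((1 - ρsp) / 2) := by
      simp only [smW]
      rw [if_neg hne]
    rw [hw1] at h1; rw [hw2] at h2
    have : (1 / (Fintype.card S : ℝ)) * ρsp
        = (1 / (Fintype.card S : ℝ)) * ((1 - ρsp) / 2) := by rw [h1, h2]
    have h3 : ρsp = (1 - ρsp) / 2 :=
      mul_left_cancel₀ (one_div_ne_zero hN) this
    linarith
  · intro h c s
    subst h
    rw [Pr_and, hfst, Pr_snd]
    have hw : ∀ a : S, smW y (1/3) (a, c) = (1 / (Fintype.card S : ℝ)) * (1/3) := by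
      intro a; simp only [smW]; split <;> norm_num
    rw [hw s]
    simp only [hw, Finset.sum_const, Finset.card_univ, nsmul_eq_mul]
    field_simp
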